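/- Let 𝒮 = (S_1,…,S_n) be a list of finite nonempty subsets of a finite universe U = ⋃_i S_i, and let G and c be the genome and CNP constructed from 𝒮 as described. If there exists a sequence E of k deletion events (no duplications) such that cnp(G⟨E⟩) = c, then 𝒮 admits a set cover of cardinality at most k. -/

import Mathlib

/-!
Deletions only remove characters, and each separator `σᵢ` occurs exactly once both in `G` and in
the target profile, so no deletion may remove a separator: every deletion cuts a factor out of a
single block `q(Sᵢ)`. Hence `k` deletions touch at most `k` blocks. For each `u`, the target asks
for `f(u) − 1` copies of `γᵤ` while `G` has at least `f(u)`, so some copy was deleted, from a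
touched block `q(Sᵢ)` with `u ∈ Sᵢ`. The indices of the touched blocks therefore form a cover.
-/

/-- An event is either a deletion `del i j` (removing the substring from position `i`
to position `j`, 1-based) or a duplication `dup i j p` (copying the substring from
position `i` to position `j` and inserting the copy after position `p`). -/
inductive GEvent where
  | del (i j : ℕ)
  | dup (i j p : ℕ)
deriving DecidableEq

/-- Applying an event to a genome (a list of characters). -/
def applyEvent {α : Type*} (G : List α) : GEvent → List α
  | .del i j => G.take (i - 1) ++ G.drop j
  | .dup i j p => G.take p ++ ((G.drop (i - 1)).take (j - i + 1)) ++ G.drop p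

/-- Validity of an event on a genome: `del i j` requires `1 ≤ i ≤ j ≤ |G|`;
`dup i j p` requires `1 ≤ i ≤ j ≤ |G|` and `p ∈ {0,…,i−1} ∪ {j,…,|G|}`. -/
def GEvent.Valid {α : Type*} (G : List α) : GEvent → Prop
  | .del i j => 1 ≤ i ∧ i ≤ j ∧ j ≤ G.length
  | .dup i j p => 1 ≤ i ∧ i ≤ j ∧ j ≤ G.length ∧ (p ≤ i - 1 ∨ (j ≤ p ∧ p ≤ G.length))

/-- `applyEvents G E` is `G⟨E⟩`, the genome obtained by successively applying
the events of `E` to `G`. -/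
def applyEvents {α : Type*} (G : List α) : List GEvent → List α
  | [] => G
  | e :: E => applyEvents (applyEvent G e) E

/-- A sequence of events is valid on `G` if each event is valid on the genome
obtained by applying the previous events. -/
def ValidSeq {α : Type*} (G : List α) : List GEvent → Prop
  | [] => True
  | e :: E => e.Valid G ∧ ValidSeq (applyEvent G e) E

/-- The copy-number profile of a genome: the number of occurrences of each character. -/
def cnp {α : Type*} [DecidableEq α] (G : List α) : α → ℕ := fun s => G.count s

/-- The Genome-to-CNP distance: the minimum length of a valid event sequence turning `G`
into a genome with CNP `c` (`⊤` if there is none). -/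
noncomputable def dGCNP {α : Type*} [DecidableEq α] (G : List α) (c : α → ℕ) : ℕ∞ :=
  sInf { k : ℕ∞ | ∃ E : List GEvent,
    ValidSeq G E ∧ (E.length : ℕ∞) = k ∧ cnp (applyEvents G E) = c }

/-- The genome constructed from a SET-COVER instance: the alphabet is `Fin n ⊕ V`, where
`Sum.inl i` is the separator character `σᵢ` and `Sum.inr u` is the character `γᵤ`;
`q i` lists the elements of `S i` (each exactly once), and
`G = σ₁ q(S₁) σ₂ q(S₂) ⋯ σₙ q(Sₙ)`. -/
def scGenome {V : Type*} (n : ℕ) (q : Fin n → List V) : List (Fin n ⊕ V) :=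
  (List.finRange n).flatMap (fun i => Sum.inl i :: (q i).map Sum.inr)

/-- The CNP constructed from a SET-COVER instance: `c(σᵢ) = 1` and `c(γᵤ) = f(u) − 1`,
where `f(u)` is the number of sets of the instance containing `u`. -/
def scCNP {V : Type*} [Fintype V] [DecidableEq V] (n : ℕ) (S : Fin n → Finset V) :
    (Fin n ⊕ V) → ℕ
  | Sum.inl _ => 1
  | Sum.inr u => (Finset.univ.filter fun i => u ∈ S i).card - 1

section Deletions

variable {α : Type*}

theorem exists_eq_append_append_of_valid_del {G : List α} {i j : ℕ}
    (h : (GEvent.del i j).Valid G) :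
    ∃ A C B, G = A ++ C ++ B ∧ C ≠ [] ∧ applyEvent G (.del i j) = A ++ B := by
  obtain ⟨hi, hij, hj⟩ := h
  refine ⟨G.take (i - 1), (G.take j).drop (i - 1), G.drop j, ?_, ?_, rfl⟩
  · have : G.take (i - 1) = (G.take j).take (i - 1) := by
      rw [List.take_take, min_eq_left (by omega)]
    rw [this, List.take_append_drop, List.take_append_drop]
  · rw [← List.length_pos_iff, List.length_drop, List.length_take]
    omega

theorem applyEvents_sublist_of_deletions {G : List α} {E : List GEvent}
    (hdel : ∀ e ∈ E, ∃ i j, e = GEvent.del i j) (hv : ValidSeq G E) :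
    (applyEvents G E).Sublist G := by
  induction E generalizing G with
  | nil => exact List.Sublist.refl G
  | cons e E ih =>
    obtain ⟨i, j, rfl⟩ := hdel _ List.mem_cons_self
    obtain ⟨A, C, B, hG, -, happ⟩ := exists_eq_append_append_of_valid_del hv.1
    have hAB : (A ++ B).Sublist G := by
      rw [hG, List.append_assoc]
      exact (List.sublist_append_right C B).append_left A
    exact (ih (fun e he => hdel e (List.mem_cons_of_mem _ he)) hv.2).trans (happ ▸ hAB)

end Deletions

section Cnp

variable {α : Type*} [DecidableEq α]

theorem cnp_append (l₁ l₂ : List α) (x : α) : cnp (l₁ ++ l₂) x = cnp l₁ x + cnp l₂ x :=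
  List.count_append ..

theorem cnp_cons (a : α) (l : List α) (x : α) :
    cnp (a :: l) x = cnp l x + if a = x then 1 else 0 := by
  simp [cnp, List.count_cons]

theorem cnp_pos_iff {l : List α} {x : α} : 0 < cnp l x ↔ x ∈ l :=
  List.count_pos_iff

theorem cnp_map_of_injective {β : Type*} [DecidableEq β] {f : α → β}
    (hf : Function.Injective f) (l : List α) (x : α) : cnp (l.map f) (f x) = cnp l x :=
  List.count_map_of_injective l f hf x

end Cnp

theorem List.append_eq_append_append_of_head_not_mem {α : Type*} {X Y A C B : List α}
    (hY : ∀ y ∈ Y.head?, y ∉ C) (h : X ++ Y = A ++ C ++ B) :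
    (∃ D, X = A ++ C ++ D ∧ B = D ++ Y) ∨ ∃ A', A = X ++ A' ∧ Y = A' ++ C ++ B := by
  rw [List.append_assoc, List.append_eq_append_iff] at h
  rcases h with ⟨A', hA, hY'⟩ | ⟨C', hX, hCB⟩
  · exact .inr ⟨A', hA, by rw [hY', List.append_assoc]⟩
  rcases List.append_eq_append_iff.1 hCB with ⟨D, hC', hB⟩ | ⟨T, hC, hY'⟩
  · exact .inl ⟨D, by rw [hX, hC', List.append_assoc], hB⟩
  cases T with
  | nil => exact .inl ⟨[], by simp_all, by simp_all⟩
  | cons y T => exact absurd (by simp [hC]) (hY y (by simp [hY']))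

section Blocks

variable {ι V : Type*}

def blockGenome (is : List ι) (w : ι → List V) : List (ι ⊕ V) :=
  is.flatMap fun i => Sum.inl i :: (w i).map Sum.inr

@[simp]
theorem blockGenome_nil (w : ι → List V) : blockGenome [] w = [] := rfl

theorem blockGenome_cons (i : ι) (is : List ι) (w : ι → List V) :
    blockGenome (i :: is) w = Sum.inl i :: ((w i).map Sum.inr ++ blockGenome is w) := rfl

theorem blockGenome_congr {is : List ι} {w w' : ι → List V} (h : ∀ i ∈ is, w i = w' i) :
    blockGenome is w = blockGenome is w' :=
  List.flatMap_congr fun i hi => by rw [h i hi]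

theorem head?_blockGenome_isLeft (is : List ι) (w : ι → List V) :
    ∀ x ∈ (blockGenome is w).head?, x.isLeft := by
  cases is <;> simp [blockGenome_cons]

theorem cnp_inl_blockGenome [DecidableEq ι] [DecidableEq V] (is : List ι) (w : ι → List V)
    (i : ι) :
    cnp (blockGenome is w) (.inl i) = is.count i := by
  induction is with
  | nil => rfl
  | cons j is ih =>
    have : cnp ((w j).map Sum.inr) (Sum.inl i : ι ⊕ V) = 0 :=
      Nat.eq_zero_of_not_pos (by simp [cnp_pos_iff])
    rw [blockGenome_cons, cnp_cons, cnp_append, ih, this, List.count_cons]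
    simp

theorem cnp_inr_blockGenome [DecidableEq ι] [DecidableEq V] (is : List ι) (w : ι → List V)
    (u : V) :
    cnp (blockGenome is w) (.inr u) = (is.map fun i => (w i).count u).sum := by
  induction is with
  | nil => rfl
  | cons j is ih =>
    rw [blockGenome_cons, cnp_cons, cnp_append, ih, cnp_map_of_injective Sum.inr_injective]
    simp [cnp]

variable [DecidableEq ι]

theorem exists_update_of_blockGenome_eq_append_append {is : List ι} (hnd : is.Nodup)
    {w : ι → List V} {A C B : List (ι ⊕ V)} (h : blockGenome is w = A ++ C ++ B)
    (hC : C ≠ []) (hsep : ∀ i, Sum.inl i ∉ C) :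
    ∃ i₀ ∈ is, ∃ s, A ++ B = blockGenome is (Function.update w i₀ s) := by
  induction is generalizing A with
  | nil => simp_all
  | cons i is ih =>
    obtain ⟨hi, hnd⟩ := List.nodup_cons.1 hnd
    rw [blockGenome_cons] at h
    cases A with
    | nil =>
      obtain ⟨c, C, rfl⟩ := List.exists_cons_of_ne_nil hC
      simp only [List.nil_append, List.cons_append, List.cons.injEq] at h
      exact absurd (h.1 ▸ List.mem_cons_self) (hsep i)
    | cons a A =>
      simp only [List.cons_append, List.cons.injEq] at h
      obtain ⟨rfl, h⟩ := h
      have hhead : ∀ y ∈ (blockGenome is w).head?, y ∉ C := fun y hy hyC => by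
        obtain ⟨j, rfl⟩ := Sum.isLeft_iff.1 (head?_blockGenome_isLeft is w y hy)
        exact hsep j hyC
      rcases List.append_eq_append_append_of_head_not_mem hhead h with
        ⟨D, hw, rfl⟩ | ⟨A', rfl, hA'⟩
      · obtain ⟨s₁₂, s₃, -, hs₁₂, hs₃⟩ := List.map_eq_append_iff.1 hw
        obtain ⟨s₁, s₂, -, hs₁, -⟩ := List.map_eq_append_iff.1 hs₁₂
        refine ⟨i, List.mem_cons_self, s₁ ++ s₃, ?_⟩
        have hrest : blockGenome is (Function.update w i (s₁ ++ s₃)) = blockGenome is w :=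
          blockGenome_congr fun j hj => Function.update_of_ne (ne_of_mem_of_not_mem hj hi) ..
        rw [blockGenome_cons, Function.update_self, hrest]
        simp [hs₁, hs₃]
      · obtain ⟨i₀, hi₀, s, hs⟩ := ih hnd hA'
        refine ⟨i₀, List.mem_cons_of_mem _ hi₀, s, ?_⟩
        rw [blockGenome_cons, Function.update_of_ne (ne_of_mem_of_not_mem hi₀ hi).symm, ← hs]
        simp

theorem exists_blockGenome_applyEvents_of_deletions {is : List ι} (hnd : is.Nodup)
    {w : ι → List V} {E : List GEvent}
    (hdel : ∀ e ∈ E, ∃ i j, e = GEvent.del i j) (hv : ValidSeq (blockGenome is w) E)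
    (hsep : ∀ i ∈ is, Sum.inl i ∈ applyEvents (blockGenome is w) E) :
    ∃ (w' : ι → List V) (D : Finset ι), D.card ≤ E.length ∧ (∀ i ∉ D, w' i = w i) ∧
      applyEvents (blockGenome is w) E = blockGenome is w' := by
  classical
  induction E generalizing w with
  | nil => exact ⟨w, ∅, by simp, fun _ _ => rfl, rfl⟩
  | cons e E ih =>
    obtain ⟨a, b, rfl⟩ := hdel _ List.mem_cons_self
    replace hdel : ∀ e ∈ E, ∃ i j, e = GEvent.del i j :=
      fun e he => hdel e (List.mem_cons_of_mem _ he)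
    obtain ⟨A, C, B, hG, hC, happ⟩ := exists_eq_append_append_of_valid_del hv.1
    have hv' : ValidSeq (A ++ B) E := happ ▸ hv.2
    have hsep' : ∀ i ∈ is, Sum.inl i ∈ applyEvents (A ++ B) E := happ ▸ hsep
    -- every separator occurs once and must survive, so none of them is deleted
    have hCsep : ∀ i, Sum.inl i ∉ C := by
      intro i hiC
      have hcount := cnp_inl_blockGenome is w i
      rw [hG, cnp_append, cnp_append] at hcount
      have hCpos := cnp_pos_iff.2 hiC
      have hi : i ∈ is := List.count_pos_iff.1 (by omega)
      have hABpos := cnp_pos_iff.2 ((applyEvents_sublist_of_deletions hdel hv').subset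
        (hsep' i hi))
      rw [cnp_append] at hABpos
      have := List.nodup_iff_count_le_one.1 hnd i
      omega
    obtain ⟨i₀, -, s, hAB⟩ := exists_update_of_blockGenome_eq_append_append hnd hG hC hCsep
    rw [hAB] at hv' hsep'
    obtain ⟨w', D, hD, hw', hE⟩ := ih hdel hv' hsep'
    refine ⟨w', insert i₀ D, ?_, fun i hi => ?_, ?_⟩
    · exact (Finset.card_insert_le _ _).trans (by simpa using hD)
    · rw [Finset.mem_insert, not_or] at hi
      rw [hw' i hi.2, Function.update_of_ne hi.1]
    · change applyEvents (applyEvent _ _) E = _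
      rw [happ, hAB, hE]

end Blocks

theorem scGenome_eq_blockGenome {V : Type*} (n : ℕ) (q : Fin n → List V) :
    scGenome n q = blockGenome (List.finRange n) q := rfl

theorem deletions_to_cover_general
    {V : Type*} [Fintype V] [DecidableEq V] (n : ℕ) (S : Fin n → Finset V)
    (hU : ∀ u : V, ∃ i, u ∈ S i)
    (q : Fin n → List V)
    (hqmem : ∀ i u, u ∈ q i ↔ u ∈ S i)
    (k : ℕ) (E : List GEvent)
    (hdel : ∀ e ∈ E, ∃ i j, e = GEvent.del i j)
    (hlen : E.length = k)
    (hvalid : ValidSeq (scGenome n q) E)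
    (hcnp : cnp (applyEvents (scGenome n q) E) = scCNP n S) :
    ∃ I : Finset (Fin n), I.card ≤ k ∧ ∀ u : V, ∃ i ∈ I, u ∈ S i := by
  rw [scGenome_eq_blockGenome] at hvalid hcnp
  have hsep : ∀ i ∈ List.finRange n, Sum.inl i ∈ applyEvents (blockGenome _ q) E :=
    fun i _ => cnp_pos_iff.1 <| by rw [hcnp]; exact Nat.one_pos
  obtain ⟨w', D, hD, hw', hE⟩ :=
    exists_blockGenome_applyEvents_of_deletions (List.nodup_finRange n) hdel hvalid hsep
  refine ⟨D, hlen ▸ hD, fun u => ?_⟩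
  have hfinal : ∑ i, (w' i).count u = (Finset.univ.filter fun i => u ∈ S i).card - 1 := by
    rw [Fin.sum_univ_def, ← cnp_inr_blockGenome, ← hE, hcnp, scCNP]
  have hinit : (Finset.univ.filter fun i => u ∈ S i).card ≤ ∑ i, (q i).count u := by
    rw [Finset.card_filter]
    refine Finset.sum_le_sum fun i _ => ?_
    split_ifs with h
    · exact List.count_pos_iff.2 ((hqmem i u).2 h)
    · exact Nat.zero_le _
  have hcovered : 0 < (Finset.univ.filter fun i => u ∈ S i).card :=
    Finset.card_pos.2 <| (hU u).imp fun i hi => by simpa using hi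
  obtain ⟨i, -, hi⟩ :=
    Finset.exists_lt_of_sum_lt (show ∑ i, (w' i).count u < ∑ i, (q i).count u by omega)
  exact ⟨i, by_contra fun hiD => hi.ne (by rw [hw' i hiD]),
    (hqmem i u).1 (List.count_pos_iff.1 (by omega))⟩

/-- Lemma 3 of the paper: if a sequence of `k` deletion events
(no duplications) transforms the genome constructed from the SET-COVER instance
`S₁, …, Sₙ` (nonempty finite sets covering the finite universe `V`) into a genome
whose CNP is the constructed CNP, then the instance admits a set cover
(given by an index set `I`) of cardinality at most `k`. -/
theorem deletions_to_cover
    {V : Type*} [Fintype V] [DecidableEq V] (n : ℕ) (S : Fin n → Finset V)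
    (hne : ∀ i, (S i).Nonempty)
    (hU : ∀ u : V, ∃ i, u ∈ S i)
    (q : Fin n → List V)
    (hq : ∀ i, (q i).Nodup)
    (hqmem : ∀ i u, u ∈ q i ↔ u ∈ S i)
    (k : ℕ) (E : List GEvent)
    (hdel : ∀ e ∈ E, ∃ i j, e = GEvent.del i j)
    (hlen : E.length = k)
    (hvalid : ValidSeq (scGenome n q) E)
    (hcnp : cnp (applyEvents (scGenome n q) E) = scCNP n S) :
    ∃ I : Finset (Fin n), I.card ≤ k ∧ ∀ u : V, ∃ i ∈ I, u ∈ S i :=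
  deletions_to_cover_general n S hU q hqmem k E hdel hlen hvalid hcnp
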